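/- The sequent calculus PLL for the propositional lax logic, obtained from LJ by adding the rule ◇L (from Γ, A ⇒ B infer Γ, ◇A ⇒ ◇B) and the axioms p → ◇p and ◇◇p → ◇p, has the Visser–Harrop property; in particular it has the disjunction property: if PLL proves (⇒ C ∨ D) then PLL proves (⇒ C) or PLL proves (⇒ D). -/

import Mathlib

/-! Aczel slash. Relative to a context `G`, slash atoms, `□`- and `◇`-formulas by mere
derivability from `G`, disjunctions by slashing a disjunct, and implications by derivability
together with transfer of the slash from antecedent to consequent. Every rule of `LJ + ◇L`
preserves the slash, and so do the lax axioms `p → ◇p` and `◇◇p → ◇p`, whose consequents are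
`◇`-formulas. Harrop formulas derivable from `G` are slashed, and a derivable `A → B` is slashed
as soon as `A` is not derivable. So if no `A_i` is derivable from `G = Γ, {A_i → B_i}`, the
antecedent `G` slashes itself, hence slashes `C ∨ D`, and one of `C`, `D` is derivable. -/

set_option autoImplicit false

namespace UPT

/-- Modal formulas over atoms of type `α` (the language `ℒ = {∧,∨,→,⊤,⊥,□,◇}`). -/
inductive Fml (α : Type) : Type where
  | atom : α → Fml α
  | top  : Fml α
  | bot  : Fml α
  | and  : Fml α → Fml α → Fml α
  | or   : Fml α → Fml α → Fml α
  | imp  : Fml α → Fml α → Fml α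
  | box  : Fml α → Fml α
  | dia  : Fml α → Fml α
deriving DecidableEq

variable {α β : Type}

/-- Simultaneous substitution of formulas for atoms. -/
def Fml.subst (σ : β → Fml α) : Fml β → Fml α
  | .atom b  => σ b
  | .top     => .top
  | .bot     => .bot
  | .and A B => .and (A.subst σ) (B.subst σ)
  | .or A B  => .or (A.subst σ) (B.subst σ)
  | .imp A B => .imp (A.subst σ) (B.subst σ)
  | .box A   => .box (A.subst σ)
  | .dia A   => .dia (A.subst σ)

/-- A sequent: a finite multiset antecedent together with a succedent
containing at most one formula. -/
abbrev Seq (α : Type) : Type := Multiset (Fml α) × Option (Fml α)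

/-- A rule set relates a (finite) list of premise sequents to a conclusion sequent. -/
abbrev RuleSet (α : Type) : Type := List (Seq α) → Seq α → Prop

/-- The axioms and rules of the single-conclusion sequent calculus `LJ`, stated
schematically: they are closed under substituting arbitrary formulas for atoms
and arbitrary multisets (resp. succedents) for the context variables. -/
inductive LJRule : List (Seq α) → Seq α → Prop where
  | id (Γ : Multiset (Fml α)) (A : Fml α) : LJRule [] (A ::ₘ Γ, some A)
  | botL (Γ : Multiset (Fml α)) (Δ : Option (Fml α)) : LJRule [] (.bot ::ₘ Γ, Δ)
  | topR (Γ : Multiset (Fml α)) : LJRule [] (Γ, some .top)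
  | wL (A : Fml α) (Γ : Multiset (Fml α)) (Δ : Option (Fml α)) :
      LJRule [(Γ, Δ)] (A ::ₘ Γ, Δ)
  | wR (A : Fml α) (Γ : Multiset (Fml α)) : LJRule [(Γ, none)] (Γ, some A)
  | cL (A : Fml α) (Γ : Multiset (Fml α)) (Δ : Option (Fml α)) :
      LJRule [(A ::ₘ A ::ₘ Γ, Δ)] (A ::ₘ Γ, Δ)
  | cut (A : Fml α) (Γ : Multiset (Fml α)) (Δ : Option (Fml α)) :
      LJRule [(Γ, some A), (A ::ₘ Γ, Δ)] (Γ, Δ)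
  | andL₁ (A B : Fml α) (Γ : Multiset (Fml α)) (Δ : Option (Fml α)) :
      LJRule [(A ::ₘ Γ, Δ)] (.and A B ::ₘ Γ, Δ)
  | andL₂ (A B : Fml α) (Γ : Multiset (Fml α)) (Δ : Option (Fml α)) :
      LJRule [(B ::ₘ Γ, Δ)] (.and A B ::ₘ Γ, Δ)
  | andR (A B : Fml α) (Γ : Multiset (Fml α)) :
      LJRule [(Γ, some A), (Γ, some B)] (Γ, some (.and A B))
  | orL (A B : Fml α) (Γ : Multiset (Fml α)) (Δ : Option (Fml α)) :
      LJRule [(A ::ₘ Γ, Δ), (B ::ₘ Γ, Δ)] (.or A B ::ₘ Γ, Δ)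
  | orR₁ (A B : Fml α) (Γ : Multiset (Fml α)) : LJRule [(Γ, some A)] (Γ, some (.or A B))
  | orR₂ (A B : Fml α) (Γ : Multiset (Fml α)) : LJRule [(Γ, some B)] (Γ, some (.or A B))
  | impL (A B : Fml α) (Γ : Multiset (Fml α)) (Δ : Option (Fml α)) :
      LJRule [(Γ, some A), (B ::ₘ Γ, Δ)] (.imp A B ::ₘ Γ, Δ)
  | impR (A B : Fml α) (Γ : Multiset (Fml α)) :
      LJRule [(A ::ₘ Γ, some B)] (Γ, some (.imp A B))

/-- The rule `K_□`: from `Γ ⇒ A` infer `□Γ ⇒ □A`. -/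
inductive KBoxRule : List (Seq α) → Seq α → Prop where
  | mk (Γ : Multiset (Fml α)) (A : Fml α) :
      KBoxRule [(Γ, some A)] (Γ.map Fml.box, some (.box A))

/-- The rule `K_◇`: from `Γ, A ⇒ B` infer `□Γ, ◇A ⇒ ◇B`. -/
inductive KDiaRule : List (Seq α) → Seq α → Prop where
  | mk (Γ : Multiset (Fml α)) (A B : Fml α) :
      KDiaRule [(A ::ₘ Γ, some B)] (.dia A ::ₘ Γ.map Fml.box, some (.dia B))

/-- The rule `◇L`: from `Γ, A ⇒ B` infer `Γ, ◇A ⇒ ◇B`. -/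
inductive DiaLRule : List (Seq α) → Seq α → Prop where
  | mk (Γ : Multiset (Fml α)) (A B : Fml α) :
      DiaLRule [(A ::ₘ Γ, some B)] (.dia A ::ₘ Γ, some (.dia B))

/-- Adding a set `Ax` of axioms to a calculus: the initial sequents `⇒ σ(A)`
for every substitution instance `σ(A)` of every `A ∈ Ax`. -/
def axRule (Ax : Fml α → Prop) : RuleSet α := fun ps c =>
  ps = [] ∧ ∃ (A : Fml α) (σ : α → Fml α), Ax A ∧ c = ((0 : Multiset (Fml α)), some (A.subst σ))

/-- Using a set of sequents as additional initial sequents (assumptions). -/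
def hypRule (H : Set (Seq α)) : RuleSet α := fun ps c => ps = [] ∧ c ∈ H

/-- The sequent calculus `LJ+Ax`. -/
def LJSys (Ax : Fml α → Prop) : RuleSet α := fun ps c => LJRule ps c ∨ axRule Ax ps c

/-- The sequent calculus `CK+Ax = LJ + K_□ + K_◇ + Ax`. -/
def CKSys (Ax : Fml α → Prop) : RuleSet α := fun ps c =>
  LJRule ps c ∨ KBoxRule ps c ∨ KDiaRule ps c ∨ axRule Ax ps c

/-- The sequent calculus `CK_□+Ax = LJ + K_□ + Ax`. -/
def CKBoxSys (Ax : Fml α → Prop) : RuleSet α := fun ps c =>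
  LJRule ps c ∨ KBoxRule ps c ∨ axRule Ax ps c

/-- The sequent calculus `BLL+Ax = LJ + ◇L + Ax`. -/
def BLLSys (Ax : Fml α → Prop) : RuleSet α := fun ps c =>
  LJRule ps c ∨ DiaLRule ps c ∨ axRule Ax ps c

/-- Provability of a sequent in the calculus generated by a rule set. -/
inductive Derives (R : RuleSet α) : Multiset (Fml α) → Option (Fml α) → Prop where
  | step {ps : List (Seq α)} {c : Seq α} (hr : R ps c)
      (hp : ∀ p ∈ ps, Derives R p.1 p.2) : Derives R c.1 c.2

/-- Basic formulas: generated from atoms, `⊤`, `⊥` by `∧`, `∨`, `◇`. -/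
inductive Basic : Fml α → Prop where
  | atom (a : α) : Basic (.atom a)
  | top : Basic (.top : Fml α)
  | bot : Basic (.bot : Fml α)
  | and {A B : Fml α} : Basic A → Basic B → Basic (.and A B)
  | or {A B : Fml α} : Basic A → Basic B → Basic (.or A B)
  | dia {A : Fml α} : Basic A → Basic (.dia A)

/-- Almost positive formulas: generated from basic formulas by `∧`, `∨`, `□`, `◇`
and implications `A → B` with `A` basic and `B` almost positive. -/
inductive AlmostPos : Fml α → Prop where
  | basic {A : Fml α} : Basic A → AlmostPos A
  | and {A B : Fml α} : AlmostPos A → AlmostPos B → AlmostPos (.and A B)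
  | or {A B : Fml α} : AlmostPos A → AlmostPos B → AlmostPos (.or A B)
  | box {A : Fml α} : AlmostPos A → AlmostPos (.box A)
  | dia {A : Fml α} : AlmostPos A → AlmostPos (.dia A)
  | imp {A B : Fml α} : Basic A → AlmostPos B → AlmostPos (.imp A B)

/-- Constructive formulas: generated from basic formulas by `∧`, `□` and
implications `A → B` with `A` almost positive and `B` constructive. -/
inductive Constructive : Fml α → Prop where
  | basic {A : Fml α} : Basic A → Constructive A
  | and {A B : Fml α} : Constructive A → Constructive B → Constructive (.and A B)
  | box {A : Fml α} : Constructive A → Constructive (.box A)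
  | imp {A B : Fml α} : AlmostPos A → Constructive B → Constructive (.imp A B)

/-- Harrop formulas: atoms, `⊥`, `⊤`, closed under `∧`, `□`, and implications
`A → B` with `A` arbitrary and `B` Harrop. -/
inductive Harrop : Fml α → Prop where
  | atom (a : α) : Harrop (.atom a)
  | top : Harrop (.top : Fml α)
  | bot : Harrop (.bot : Fml α)
  | and {A B : Fml α} : Harrop A → Harrop B → Harrop (.and A B)
  | box {A : Fml α} : Harrop A → Harrop (.box A)
  | imp (A : Fml α) {B : Fml α} : Harrop B → Harrop (.imp A B)

/-- Conjunction of a list of formulas (`⋀∅ = ⊤`). -/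
def conj : List (Fml α) → Fml α
  | [] => .top
  | [A] => A
  | A :: B :: l => .and A (conj (B :: l))

/-- Disjunction of a list of formulas (`⋁∅ = ⊥`). -/
def disj : List (Fml α) → Fml α
  | [] => .bot
  | [A] => A
  | A :: B :: l => .or A (disj (B :: l))

/-- Disjunction of a succedent (at most one formula; `⋁∅ = ⊥`). -/
def odisj : Option (Fml α) → Fml α
  | none => .bot
  | some A => A

/-- The multiset `{A_i → B_i}_{i ∈ I}` of implications of an indexed family. -/
def imps (AB : List (Fml α × Fml α)) : Multiset (Fml α) :=
  ↑(AB.map fun p => Fml.imp p.1 p.2)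

/-- The conjunction `⋀_{i∈I} (A_i → B_i)` of an indexed family of implications. -/
def impConj (AB : List (Fml α × Fml α)) : Fml α :=
  conj (AB.map fun p => Fml.imp p.1 p.2)

/-- Truth in the one-node *irreflexive* frame `𝒦ᵢ` under a Boolean valuation:
`□A` is always true and `◇A` is always false; the propositional connectives
are evaluated classically. -/
def evalI (v : α → Bool) : Fml α → Bool
  | .atom a  => v a
  | .top     => true
  | .bot     => false
  | .and A B => evalI v A && evalI v B
  | .or A B  => evalI v A || evalI v B
  | .imp A B => !evalI v A || evalI v B
  | .box _   => true
  | .dia _   => false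

/-- Truth in the one-node *reflexive* frame `𝒦ᵣ` under a Boolean valuation:
`□A` and `◇A` take the value of `A`. -/
def evalR (v : α → Bool) : Fml α → Bool
  | .atom a  => v a
  | .top     => true
  | .bot     => false
  | .and A B => evalR v A && evalR v B
  | .or A B  => evalR v A || evalR v B
  | .imp A B => !evalR v A || evalR v B
  | .box A   => evalR v A
  | .dia A   => evalR v A

/-- Validity of a sequent with respect to a one-node semantics: under every
valuation, if all formulas of the antecedent are true then so is the succedent. -/
def SeqValid (ev : (α → Bool) → Fml α → Bool) (Γ : Multiset (Fml α)) (Δ : Option (Fml α)) :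
    Prop :=
  ∀ v : α → Bool, (∀ A ∈ Γ, ev v A = true) → ∃ B ∈ Δ, ev v B = true

/-- `CK+Ax` is T-free: every provable sequent is valid in the irreflexive node frame. -/
def TFree (Ax : Fml α → Prop) : Prop :=
  ∀ (Γ : Multiset (Fml α)) (Δ : Option (Fml α)), Derives (CKSys Ax) Γ Δ → SeqValid evalI Γ Δ

/-- `CK+Ax` is T-full: every provable sequent is valid in the reflexive node
frame and the calculus proves `⇒ □p → p` and `⇒ p → ◇p`. -/
def TFull (Ax : Fml α → Prop) : Prop :=
  (∀ (Γ : Multiset (Fml α)) (Δ : Option (Fml α)), Derives (CKSys Ax) Γ Δ → SeqValid evalR Γ Δ) ∧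
  (∀ a : α, Derives (CKSys Ax) 0 (some (.imp (.box (.atom a)) (.atom a)))) ∧
  (∀ a : α, Derives (CKSys Ax) 0 (some (.imp (.atom a) (.dia (.atom a)))))

/-- Classical validity of a (modality-free) sequent: `⋀Γ → ⋁Δ` is true under
every Boolean valuation of the atoms. -/
def ClValid (Γ : Multiset (Fml α)) (Δ : Option (Fml α)) : Prop :=
  ∀ v : α → Bool, (∀ A ∈ Γ, evalI v A = true) → ∃ B ∈ Δ, evalI v B = true

/-- Nonempty conjunctions of atoms. -/
inductive AtomConj : Fml α → Prop where
  | single (a : α) : AtomConj (.atom a)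
  | and {A B : Fml α} : AtomConj A → AtomConj B → AtomConj (.and A B)

/-- Implicational Horn formulas: `⊥`, atoms, and implications `⋀Q → r` with `Q`
a nonempty multiset of atoms and `r` an atom or `⊥`. -/
inductive ImpHorn : Fml α → Prop where
  | bot : ImpHorn (.bot : Fml α)
  | atom (a : α) : ImpHorn (.atom a)
  | impAtom {A : Fml α} (hA : AtomConj A) (a : α) : ImpHorn (.imp A (.atom a))
  | impBot {A : Fml α} (hA : AtomConj A) : ImpHorn (.imp A .bot)

/-- Formulas of the form `◇^n p` with `p` an atom and `n ≥ 0`. -/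
inductive DiaPowAtom : Fml α → Prop where
  | atom (a : α) : DiaPowAtom (.atom a)
  | dia {A : Fml α} : DiaPowAtom A → DiaPowAtom (.dia A)

/-- Nonempty conjunctions `⋀_{i=1}^k ◇^{n_i} p_i` of formulas `◇^{n_i} p_i`. -/
inductive DiaConj : Fml α → Prop where
  | single {A : Fml α} : DiaPowAtom A → DiaConj A
  | and {A B : Fml α} : DiaConj A → DiaConj B → DiaConj (.and A B)

/-- Modal Horn formulas: `⊥` and atoms, closed under `□` and under implications
`A → B` with `A = ⋀_{i=1}^k ◇^{n_i} p_i` and `B` modal Horn. -/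
inductive ModalHorn : Fml α → Prop where
  | bot : ModalHorn (.bot : Fml α)
  | atom (a : α) : ModalHorn (.atom a)
  | box {A : Fml α} : ModalHorn A → ModalHorn (.box A)
  | imp {A B : Fml α} : DiaConj A → ModalHorn B → ModalHorn (.imp A B)

/-- The predicate "all atoms of the formula satisfy `P`". -/
def Fml.AtomsIn (P : α → Prop) : Fml α → Prop
  | .atom a  => P a
  | .top     => True
  | .bot     => True
  | .and A B => A.AtomsIn P ∧ B.AtomsIn P
  | .or A B  => A.AtomsIn P ∧ B.AtomsIn P
  | .imp A B => A.AtomsIn P ∧ B.AtomsIn P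
  | .box A   => A.AtomsIn P
  | .dia A   => A.AtomsIn P

/-- No `◇` occurs in the formula. -/
def Fml.DiaFree : Fml α → Prop
  | .atom _  => True
  | .top     => True
  | .bot     => True
  | .and A B => A.DiaFree ∧ B.DiaFree
  | .or A B  => A.DiaFree ∧ B.DiaFree
  | .imp A B => A.DiaFree ∧ B.DiaFree
  | .box A   => A.DiaFree
  | .dia _   => False

/-- No `□` occurs in the formula. -/
def Fml.BoxFree : Fml α → Prop
  | .atom _  => True
  | .top     => True
  | .bot     => True
  | .and A B => A.BoxFree ∧ B.BoxFree
  | .or A B  => A.BoxFree ∧ B.BoxFree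
  | .imp A B => A.BoxFree ∧ B.BoxFree
  | .box _   => False
  | .dia A   => A.BoxFree

/-- The formula is modality-free (propositional). -/
def Fml.ModFree : Fml α → Prop
  | .atom _  => True
  | .top     => True
  | .bot     => True
  | .and A B => A.ModFree ∧ B.ModFree
  | .or A B  => A.ModFree ∧ B.ModFree
  | .imp A B => A.ModFree ∧ B.ModFree
  | .box _   => False
  | .dia _   => False

/-- An angling of the language: an injection `φ ↦ ⟨φ⟩` from formulas into the
atoms whose image (the angled atoms) is disjoint from a fixed infinite set of
plain atoms. -/
structure Angling (α : Type) where
  angle : Fml α → α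
  plain : Set α
  inj : Function.Injective angle
  plain_infinite : plain.Infinite
  disjoint : ∀ φ : Fml α, angle φ ∉ plain

/-- `a` is an angled atom. -/
def Angling.Angled (S : Angling α) (a : α) : Prop := ∃ φ : Fml α, S.angle φ = a

/-- The translation `t`: `⊥^t = ⊥`, `p^t = ⟨p⟩`, `⊤^t = ⟨⊤⟩`,
`(A ∘ B)^t = (A^t ∘ B^t) ∧ ⟨A ∘ B⟩` and `(○A)^t = (○A^t) ∧ ⟨○A⟩`. -/
def Angling.tr (S : Angling α) : Fml α → Fml α
  | .atom a  => .atom (S.angle (.atom a))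
  | .top     => .atom (S.angle .top)
  | .bot     => .bot
  | .and A B => .and (.and (S.tr A) (S.tr B)) (.atom (S.angle (.and A B)))
  | .or A B  => .and (.or (S.tr A) (S.tr B)) (.atom (S.angle (.or A B)))
  | .imp A B => .and (.imp (S.tr A) (S.tr B)) (.atom (S.angle (.imp A B)))
  | .box A   => .and (.box (S.tr A)) (.atom (S.angle (.box A)))
  | .dia A   => .and (.dia (S.tr A)) (.atom (S.angle (.dia A)))

/-- Action of the standard substitution on atoms: an angled atom `⟨φ⟩` is sent
to `φ`; plain atoms are fixed. -/
noncomputable def Angling.stdAtom (S : Angling α) (a : α) : Fml α :=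
  haveI := Classical.propDecidable (∃ φ : Fml α, S.angle φ = a)
  if h : ∃ φ : Fml α, S.angle φ = a then h.choose else .atom a

/-- The standard substitution `s`: replaces each angled atom `⟨φ⟩` by `φ`,
fixes the plain atoms, and commutes with all connectives. -/
noncomputable def Angling.std (S : Angling α) : Fml α → Fml α :=
  Fml.subst S.stdAtom

/-- The Visser–Harrop property of a calculus. -/
def VisserHarrop (R : RuleSet α) : Prop :=
  ∀ (Γ : Multiset (Fml α)), (∀ A ∈ Γ, Harrop A) →
  ∀ (AB : List (Fml α × Fml α)) (C D : Fml α),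
    Derives R (Γ + imps AB) (some (.or C D)) →
    Derives R (Γ + imps AB) (some C) ∨
    Derives R (Γ + imps AB) (some D) ∨
    ∃ p ∈ AB, Derives R (Γ + imps AB) (some p.1)

/-- The disjunction property of a calculus. -/
def DisjProp (R : RuleSet α) : Prop :=
  ∀ C D : Fml α, Derives R 0 (some (.or C D)) →
    Derives R 0 (some C) ∨ Derives R 0 (some D)

/-- The formula interpretation `I(Γ ⇒ Δ) = ⋀Γ → ⋁Δ` belongs to `L` (stated for
every enumeration of the antecedent multiset as a list). -/
def interpIn (L : Set (Fml α)) (s : Seq α) : Prop :=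
  ∀ l : List (Fml α), (↑l : Multiset (Fml α)) = s.1 → Fml.imp (conj l) (odisj s.2) ∈ L

/- Named modal axioms (with `p := atom 0`, `q := atom 1`). -/
def axTa : Fml ℕ := .imp (.box (.atom 0)) (.atom 0)
def axTb : Fml ℕ := .imp (.atom 0) (.dia (.atom 0))
def axBa : Fml ℕ := .imp (.dia (.box (.atom 0))) (.atom 0)
def axBb : Fml ℕ := .imp (.atom 0) (.box (.dia (.atom 0)))
def ax4a : Fml ℕ := .imp (.box (.atom 0)) (.box (.box (.atom 0)))
def ax4b : Fml ℕ := .imp (.dia (.dia (.atom 0))) (.dia (.atom 0))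
def ax5a : Fml ℕ := .imp (.dia (.box (.atom 0))) (.box (.atom 0))
def ax5b : Fml ℕ := .imp (.dia (.atom 0)) (.box (.dia (.atom 0)))
def axDiaBot : Fml ℕ := .imp (.dia .bot) .bot
def axDiaOr : Fml ℕ :=
  .imp (.dia (.or (.atom 0) (.atom 1))) (.or (.dia (.atom 0)) (.dia (.atom 1)))
def axBoxImp : Fml ℕ :=
  .imp (.imp (.dia (.atom 0)) (.box (.atom 1))) (.box (.imp (.atom 0) (.atom 1)))

/-- The axioms of `X ⊆ {T, B, 4, 5}` in both their `a`- and `b`-versions. -/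
def XAxioms (tT tB t4 t5 : Bool) : Set (Fml ℕ) :=
  (if tT then ({axTa, axTb} : Set (Fml ℕ)) else ∅) ∪
  (if tB then ({axBa, axBb} : Set (Fml ℕ)) else ∅) ∪
  (if t4 then ({ax4a, ax4b} : Set (Fml ℕ)) else ∅) ∪
  (if t5 then ({ax5a, ax5b} : Set (Fml ℕ)) else ∅)

/-- The additional axioms of `IK` over `CK`. -/
def IKExtra : Set (Fml ℕ) := {axDiaBot, axDiaOr, axBoxImp}

/-- The right rule with premises `{Γ, φ̄_i ⇒ ψ̄_i}_{i∈I}` and conclusion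
`Γ, θ̄ ⇒ η̄`, closed under all substitutions of formulas for atoms and
multisets for the context `Γ`. -/
def rightRuleInst (prems : List (List (Fml α) × Option (Fml α)))
    (θ : List (Fml α)) (η : Option (Fml α)) : RuleSet α := fun ps c =>
  ∃ (σ : α → Fml α) (Γ : Multiset (Fml α)),
    ps = prems.map (fun pr =>
        ((Γ + ↑(pr.1.map (Fml.subst σ)) : Multiset (Fml α)), pr.2.map (Fml.subst σ))) ∧
    c = ((Γ + ↑(θ.map (Fml.subst σ)) : Multiset (Fml α)), η.map (Fml.subst σ))

/-- The left rule with premises `{Γ, φ̄_i ⇒ ψ̄_i}_{i∈I} ∪ {Γ, θ̄_j ⇒ Δ}_{j∈J}`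
and conclusion `Γ, η̄ ⇒ Δ`, closed under all substitutions of formulas for
atoms and multisets for `Γ` and `Δ`. -/
def leftRuleInst (prems : List (List (Fml α) × Option (Fml α)))
    (lefts : List (List (Fml α))) (η : List (Fml α)) : RuleSet α := fun ps c =>
  ∃ (σ : α → Fml α) (Γ : Multiset (Fml α)) (Δ : Option (Fml α)),
    ps = prems.map (fun pr =>
          ((Γ + ↑(pr.1.map (Fml.subst σ)) : Multiset (Fml α)), pr.2.map (Fml.subst σ)))
        ++ lefts.map (fun θj => ((Γ + ↑(θj.map (Fml.subst σ)) : Multiset (Fml α)), Δ)) ∧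
    c = ((Γ + ↑(η.map (Fml.subst σ)) : Multiset (Fml α)), Δ)

/-- The formula `Ax_R` of a right rule. -/
def AxRight (prems : List (List (Fml α) × Option (Fml α)))
    (θ : List (Fml α)) (η : Option (Fml α)) : Fml α :=
  .imp (.and (conj (prems.map fun pr => .imp (conj pr.1) (odisj pr.2))) (conj θ)) (odisj η)

/-- The formula `Ax_R` of a left rule. -/
def AxLeft (prems : List (List (Fml α) × Option (Fml α)))
    (lefts : List (List (Fml α))) (η : List (Fml α)) : Fml α :=
  .imp (.and (conj (prems.map fun pr => .imp (conj pr.1) (odisj pr.2))) (conj η))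
    (disj (lefts.map conj))

/-- The forgetful translation `f_i`: fixes atoms, `⊤`, `⊥`, commutes with
`∧`, `∨`, `→`, `□`, and sends every `◇A` to `⊥`. -/
def fi : Fml α → Fml α
  | .atom a  => .atom a
  | .top     => .top
  | .bot     => .bot
  | .and A B => .and (fi A) (fi B)
  | .or A B  => .or (fi A) (fi B)
  | .imp A B => .imp (fi A) (fi B)
  | .box A   => .box (fi A)
  | .dia _   => .bot

/-- The forgetful translation `f_r`: fixes atoms, `⊤`, `⊥`, commutes with
`∧`, `∨`, `→`, `□`, and sends `◇A` to `f_r A`. -/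
def fr : Fml α → Fml α
  | .atom a  => .atom a
  | .top     => .top
  | .bot     => .bot
  | .and A B => .and (fr A) (fr B)
  | .or A B  => .or (fr A) (fr B)
  | .imp A B => .imp (fr A) (fr B)
  | .box A   => .box (fr A)
  | .dia A   => fr A


/-- The axioms of the propositional lax logic: `p → ◇p` and `◇◇p → ◇p`. -/
def PLLAx : Fml ℕ → Prop := fun A => A = axTb ∨ A = ax4b

class ExtendsLJ (R : RuleSet α) : Prop where
  lj : ∀ {ps c}, LJRule ps c → R ps c

instance (Ax : Fml α → Prop) : ExtendsLJ (BLLSys Ax) := ⟨Or.inl⟩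

namespace Derives

variable {R : RuleSet α} [ExtendsLJ R] {Γ : Multiset (Fml α)} {Δ : Option (Fml α)} {A B : Fml α}

lemma ofLJ₀ {c : Seq α} (h : LJRule [] c) : Derives R c.1 c.2 :=
  .step (ExtendsLJ.lj h) (by simp)

lemma ofLJ₁ {p c : Seq α} (h : LJRule [p] c) (hp : Derives R p.1 p.2) : Derives R c.1 c.2 :=
  .step (ExtendsLJ.lj h) (by simpa using hp)

lemma ofLJ₂ {p q c : Seq α} (h : LJRule [p, q] c) (hp : Derives R p.1 p.2)
    (hq : Derives R q.1 q.2) : Derives R c.1 c.2 :=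
  .step (ExtendsLJ.lj h) (by simp [hp, hq])

lemma of_mem (h : A ∈ Γ) : Derives R Γ (some A) := by
  classical
  simpa [Multiset.cons_erase h] using ofLJ₀ (R := R) (LJRule.id (Γ.erase A) A)

lemma add_left (S : Multiset (Fml α)) (h : Derives R Γ Δ) : Derives R (S + Γ) Δ := by
  induction S using Multiset.induction with
  | empty => simpa using h
  | cons A S ih => simpa using ofLJ₁ (LJRule.wL A (S + Γ) Δ) ih

lemma cut (hA : Derives R Γ (some A)) (h : Derives R (A ::ₘ Γ) Δ) : Derives R Γ Δ :=
  ofLJ₂ (LJRule.cut A Γ Δ) hA h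

lemma cut_add {S : Multiset (Fml α)} (h : Derives R (Γ + S) Δ)
    (hS : ∀ A ∈ S, Derives R Γ (some A)) : Derives R Γ Δ := by
  induction S using Multiset.induction with
  | empty => simpa using h
  | cons A S ih =>
    rw [Multiset.forall_mem_cons] at hS
    refine ih (cut (A := A) ?_ ?_) hS.2
    · simpa [add_comm] using add_left S hS.1
    · simpa [Multiset.add_cons] using h

lemma cut_multiset {S : Multiset (Fml α)} (h : Derives R S Δ)
    (hS : ∀ A ∈ S, Derives R Γ (some A)) : Derives R Γ Δ :=
  cut_add (by simpa [add_comm] using add_left Γ h) hS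

lemma impE (hAB : Derives R Γ (some (.imp A B))) (hA : Derives R Γ (some A)) :
    Derives R Γ (some B) :=
  cut hAB (ofLJ₂ (LJRule.impL A B Γ (some B)) hA (ofLJ₀ (LJRule.id Γ B)))

lemma andE₁ (h : Derives R Γ (some (.and A B))) : Derives R Γ (some A) :=
  cut h (ofLJ₁ (LJRule.andL₁ A B Γ (some A)) (ofLJ₀ (LJRule.id Γ A)))

lemma andE₂ (h : Derives R Γ (some (.and A B))) : Derives R Γ (some B) :=
  cut h (ofLJ₁ (LJRule.andL₂ A B Γ (some B)) (ofLJ₀ (LJRule.id Γ B)))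

lemma botE (h : Derives R Γ (some .bot)) : Derives R Γ Δ :=
  cut h (ofLJ₀ (LJRule.botL Γ Δ))

end Derives

lemma Derives.axiom_subst {Ax : Fml α → Prop} {A : Fml α} (hA : Ax A) (σ : α → Fml α)
    (Γ : Multiset (Fml α)) : Derives (BLLSys Ax) Γ (some (A.subst σ)) := by
  have h : Derives (BLLSys Ax) 0 (some (A.subst σ)) :=
    .step (c := (0, some (A.subst σ))) (Or.inr (Or.inr ⟨rfl, A, σ, hA, rfl⟩)) (by simp)
  simpa using h.add_left Γ

variable {R : RuleSet α}

def Slash (R : RuleSet α) (Γ : Multiset (Fml α)) : Fml α → Prop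
  | .atom a  => Derives R Γ (some (.atom a))
  | .top     => True
  | .bot     => Derives R Γ (some .bot)
  | .and A B => Slash R Γ A ∧ Slash R Γ B
  | .or A B  => Slash R Γ A ∨ Slash R Γ B
  | .imp A B => Derives R Γ (some (.imp A B)) ∧ (Slash R Γ A → Slash R Γ B)
  | .box A   => Derives R Γ (some (.box A))
  | .dia A   => Derives R Γ (some (.dia A))

namespace Slash

variable [ExtendsLJ R] {Γ : Multiset (Fml α)}

lemma derives : ∀ {A : Fml α}, Slash R Γ A → Derives R Γ (some A)
  | .atom _, h | .bot, h | .box _, h | .dia _, h => h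
  | .top, _ => .ofLJ₀ (LJRule.topR Γ)
  | .and A B, h => .ofLJ₂ (LJRule.andR A B Γ) h.1.derives h.2.derives
  | .or A B, .inl h => .ofLJ₁ (LJRule.orR₁ A B Γ) h.derives
  | .or A B, .inr h => .ofLJ₁ (LJRule.orR₂ A B Γ) h.derives
  | .imp _ _, h => h.1

lemma of_derives_bot (h : Derives R Γ (some .bot)) : ∀ A : Fml α, Slash R Γ A
  | .atom _ | .box _ | .dia _ => h.botE
  | .top => trivial
  | .bot => h
  | .and A B => ⟨of_derives_bot h A, of_derives_bot h B⟩
  | .or A _ => .inl (of_derives_bot h A)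
  | .imp _ B => ⟨h.botE, fun _ => of_derives_bot h B⟩

end Slash

lemma Harrop.slash [ExtendsLJ R] {Γ : Multiset (Fml α)} {A : Fml α} (hH : Harrop A)
    (hA : Derives R Γ (some A)) : Slash R Γ A := by
  induction hH with
  | atom | bot | box => exact hA
  | top => trivial
  | and _ _ ih₁ ih₂ => exact ⟨ih₁ hA.andE₁, ih₂ hA.andE₂⟩
  | imp _ _ ih => exact ⟨hA, fun hB => ih (hA.impE hB.derives)⟩

def SlashValid (R : RuleSet α) (s : Seq α) : Prop :=
  ∀ Γ, (∀ A ∈ s.1, Slash R Γ A) → Slash R Γ (odisj s.2)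

lemma LJRule.slashValid [ExtendsLJ R] {ps : List (Seq α)} {c : Seq α} (h : LJRule ps c)
    (hder : ∀ p ∈ ps, Derives R p.1 p.2) (hps : ∀ p ∈ ps, SlashValid R p) :
    SlashValid R c := by
  intro Γ hΓ
  cases h <;> simp only [List.forall_mem_cons, List.not_mem_nil, IsEmpty.forall_iff,
    implies_true, and_true] at hder hps
  case id => exact (Multiset.forall_mem_cons.1 hΓ).1
  case botL => exact Slash.of_derives_bot (Multiset.forall_mem_cons.1 hΓ).1 _
  case topR => trivial
  case wL => exact hps Γ (Multiset.forall_mem_cons.1 hΓ).2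
  case wR => exact Slash.of_derives_bot (hps Γ hΓ) _
  case cL => exact hps Γ (Multiset.forall_mem_cons.2 ⟨(Multiset.forall_mem_cons.1 hΓ).1, hΓ⟩)
  case cut => exact hps.2 Γ (Multiset.forall_mem_cons.2 ⟨hps.1 Γ hΓ, hΓ⟩)
  case andL₁ =>
    obtain ⟨hAB, hΓ⟩ := Multiset.forall_mem_cons.1 hΓ
    exact hps Γ (Multiset.forall_mem_cons.2 ⟨hAB.1, hΓ⟩)
  case andL₂ =>
    obtain ⟨hAB, hΓ⟩ := Multiset.forall_mem_cons.1 hΓ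
    exact hps Γ (Multiset.forall_mem_cons.2 ⟨hAB.2, hΓ⟩)
  case andR => exact ⟨hps.1 Γ hΓ, hps.2 Γ hΓ⟩
  case orL =>
    obtain ⟨hA | hB, hΓ⟩ := Multiset.forall_mem_cons.1 hΓ
    · exact hps.1 Γ (Multiset.forall_mem_cons.2 ⟨hA, hΓ⟩)
    · exact hps.2 Γ (Multiset.forall_mem_cons.2 ⟨hB, hΓ⟩)
  case orR₁ => exact .inl (hps Γ hΓ)
  case orR₂ => exact .inr (hps Γ hΓ)
  case impL =>
    obtain ⟨hAB, hΓ⟩ := Multiset.forall_mem_cons.1 hΓ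
    exact hps.2 Γ (Multiset.forall_mem_cons.2 ⟨hAB.2 (hps.1 Γ hΓ), hΓ⟩)
  case impR A B Γ' =>
    refine ⟨Derives.cut_multiset (.ofLJ₁ (LJRule.impR A B Γ') hder) fun C hC => (hΓ C hC).derives,
      fun hA => hps Γ (Multiset.forall_mem_cons.2 ⟨hA, hΓ⟩)⟩

theorem Derives.slashValid {Ax : Fml α → Prop}
    (hAx : ∀ A, Ax A → ∀ σ Γ, Slash (BLLSys Ax) Γ (A.subst σ))
    {S : Multiset (Fml α)} {Δ : Option (Fml α)} (h : Derives (BLLSys Ax) S Δ) :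
    SlashValid (BLLSys Ax) (S, Δ) := by
  induction h with
  | @step ps c hr hder hps =>
    rcases hr with hr | ⟨⟨Γ', A, B⟩⟩ | ⟨rfl, A, σ, hA, rfl⟩
    · exact hr.slashValid hder hps
    · intro Γ hΓ
      obtain ⟨hdiaA, hΓ'⟩ := Multiset.forall_mem_cons.1 hΓ
      have hprem : Derives (BLLSys Ax) (A ::ₘ Γ') (some B) := hder _ (List.mem_singleton_self _)
      refine Derives.cut_multiset (.step (c := (.dia A ::ₘ Γ', some (.dia B)))
        (Or.inr (Or.inl (DiaLRule.mk Γ' A B))) (by simpa using hprem)) ?_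
      exact Multiset.forall_mem_cons.2 ⟨hdiaA, fun C hC => (hΓ' C hC).derives⟩
    · exact fun Γ _ => hAx A hA σ Γ

theorem visserHarrop_BLLSys {Ax : Fml α → Prop}
    (hAx : ∀ A, Ax A → ∀ σ Γ, Slash (BLLSys Ax) Γ (A.subst σ)) : VisserHarrop (BLLSys Ax) := by
  intro Γ hΓ AB C D hCD
  set G := Γ + imps AB
  by_cases hAB : ∃ p ∈ AB, Derives (BLLSys Ax) G (some p.1)
  · exact .inr (.inr hAB)
  simp only [not_exists, not_and] at hAB
  have hG : ∀ A ∈ G, Slash (BLLSys Ax) G A := by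
    intro A hA
    rcases Multiset.mem_add.1 hA with hAΓ | hAimps
    · exact (hΓ A hAΓ).slash (.of_mem hA)
    · obtain ⟨p, hp, rfl⟩ := List.mem_map.1 (Multiset.mem_coe.1 hAimps)
      exact ⟨.of_mem hA, fun h => absurd h.derives (hAB p hp)⟩
  rcases hCD.slashValid hAx G hG with hC | hD
  · exact .inl hC.derives
  · exact .inr (.inl hD.derives)

theorem VisserHarrop.disjProp {R : RuleSet α} (h : VisserHarrop R) : DisjProp R := by
  intro C D hCD
  simpa [imps] using h 0 (by simp) [] C D (by simpa [imps] using hCD)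

lemma slash_PLLAx : ∀ A, PLLAx A → ∀ σ Γ, Slash (BLLSys PLLAx) Γ (A.subst σ) := by
  rintro A (rfl | rfl) σ Γ
  · have hax := Derives.axiom_subst (Ax := PLLAx) (.inl rfl) σ Γ
    exact ⟨hax, fun hp => hax.impE hp.derives⟩
  · have hax := Derives.axiom_subst (Ax := PLLAx) (.inr rfl) σ Γ
    exact ⟨hax, fun hp => hax.impE hp⟩

/-- the sequent calculus `PLL = LJ + ◇L + (p → ◇p) + (◇◇p → ◇p)`
has the Visser–Harrop property; in particular it has the disjunction
property. -/
theorem statement_19 :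
    (∀ (Γ : Multiset (Fml ℕ)), (∀ A ∈ Γ, Harrop A ∧ A.BoxFree) →
      ∀ (AB : List (Fml ℕ × Fml ℕ)), (∀ p ∈ AB, p.1.BoxFree ∧ p.2.BoxFree) →
      ∀ C D : Fml ℕ, C.BoxFree → D.BoxFree →
        Derives (BLLSys PLLAx) (Γ + imps AB) (some (.or C D)) →
        Derives (BLLSys PLLAx) (Γ + imps AB) (some C) ∨
        Derives (BLLSys PLLAx) (Γ + imps AB) (some D) ∨
        ∃ p ∈ AB, Derives (BLLSys PLLAx) (Γ + imps AB) (some p.1)) ∧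
    (∀ C D : Fml ℕ, C.BoxFree → D.BoxFree →
      Derives (BLLSys PLLAx) 0 (some (.or C D)) →
      Derives (BLLSys PLLAx) 0 (some C) ∨ Derives (BLLSys PLLAx) 0 (some D)) := by
  have hVH : VisserHarrop (BLLSys PLLAx) := visserHarrop_BLLSys slash_PLLAx
  exact ⟨fun Γ hΓ AB _ C D _ _ => hVH Γ (fun A hA => (hΓ A hA).1) AB C D,
    fun C D _ _ => hVH.disjProp C D⟩

end UPT
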